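/- Let F be a hyperbolic m-dimensional LFT with parameter (i, σ, p⃗, q⃗), s = σ^{-1}(i), u = −ord_p(q_s), v = ord_p(p_s), and set ι(F) = p^{mv + (m+1)u − Σ_{t ≠ s} ord_p(p_t)}. Then for every n ≥ 1 and every a ∈ (pℤ_p)^m, μ_m(F^{-1}(a + (p^nℤ_p)^m)) = ι(F)^{-1} · μ_m(a + (p^nℤ_p)^m); consequently μ_m(F^{-1}(S)) = ι(F)^{-1} μ_m(S) for every Borel set S ⊆ (pℤ_p)^m. -/

import Mathlib

open MeasureTheory Filter Topology
open scoped Classical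

noncomputable section

namespace PadicCF

variable (p : ℕ) [Fact p.Prime]

/-- `pℤ_p`, the maximal ideal of the `p`-adic integers, viewed inside `ℚ_p`. -/
def pZ : Set ℚ_[p] := {x | ‖x‖ ≤ (p : ℝ)⁻¹}

/-- `D_m`: tuples `(x_1, …, x_m)` such that `1, x_1, …, x_m` are linearly
independent over `ℤ`. -/
def Dm (m : ℕ) : Set (Fin m → ℚ_[p]) :=
  {x | ∀ (c : ℤ) (a : Fin m → ℤ), (c : ℚ_[p]) + ∑ j, (a j : ℚ_[p]) * x j = 0 →
    c = 0 ∧ ∀ j, a j = 0}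

/-- `D_m' = D_m ∩ (pℤ_p)^m`. -/
def Dm' (m : ℕ) : Set (Fin m → ℚ_[p]) := {x | x ∈ Dm p m ∧ ∀ j, x j ∈ pZ p}

variable {m : ℕ}

/-- The `m`-dimensional linear fractional transformation with parameter `(i, σ, pv, qv)`. -/
def LFT (i : Fin m) (σ : Equiv.Perm (Fin m)) (pv qv : Fin m → ℚ)
    (x : Fin m → ℚ_[p]) : Fin m → ℚ_[p] := fun k =>
  if k = σ⁻¹ i then (pv k : ℚ_[p]) / x i - (qv k : ℚ_[p])
  else (pv k : ℚ_[p]) * x (σ k) / x i - (qv k : ℚ_[p])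

/-- The inverse of the LFT with parameter `(i, σ, pv, qv)`, given by the explicit formulas
`x_i = p_s/(y_s + q_s)` and `x_k = p_s (y_t + q_t) / (p_t (y_s + q_s))` for `k ≠ i`,
where `s = σ⁻¹ i`, `t = σ⁻¹ k`. -/
def LFTinv (i : Fin m) (σ : Equiv.Perm (Fin m)) (pv qv : Fin m → ℚ)
    (y : Fin m → ℚ_[p]) : Fin m → ℚ_[p] := fun k =>
  if k = i then (pv (σ⁻¹ i) : ℚ_[p]) / (y (σ⁻¹ i) + (qv (σ⁻¹ i) : ℚ_[p]))
  else (pv (σ⁻¹ i) : ℚ_[p]) * (y (σ⁻¹ k) + (qv (σ⁻¹ k) : ℚ_[p])) /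
        ((pv (σ⁻¹ k) : ℚ_[p]) * (y (σ⁻¹ i) + (qv (σ⁻¹ i) : ℚ_[p])))

/-- Hyperbolicity of an LFT, Definition 2.6 of the paper.  Here `ord` is `padicValRat p`;
the case `q_k = 0` (where `ord q_k = ∞` by convention) is listed explicitly in (iv). -/
def Hyperbolic (i : Fin m) (σ : Equiv.Perm (Fin m)) (pv qv : Fin m → ℚ) : Prop :=
  (∀ k, pv k ≠ 0 ∧ 0 ≤ padicValRat p (pv k)) ∧
  (qv (σ⁻¹ i) ≠ 0 ∧ padicValRat p (qv (σ⁻¹ i)) ≤ 0 ∧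
    0 < padicValRat p (pv (σ⁻¹ i) / qv (σ⁻¹ i))) ∧
  (∀ k, k ≠ σ⁻¹ i → qv k ≠ 0 → padicValRat p (qv k) ≤ 0 →
    padicValRat p (pv k / qv k) < padicValRat p (pv (σ⁻¹ i) / qv (σ⁻¹ i))) ∧
  (∀ k, k ≠ σ⁻¹ i → (qv k = 0 ∨ 0 < padicValRat p (qv k)) →
    padicValRat p (pv k) < padicValRat p (pv (σ⁻¹ i) / qv (σ⁻¹ i)))

/-- `F⁻¹(D_m')`, i.e. the image of `D_m'` under the (formula-defined) inverse of the LFT. -/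
def invImg (i : Fin m) (σ : Equiv.Perm (Fin m)) (pv qv : Fin m → ℚ) :
    Set (Fin m → ℚ_[p]) := LFTinv p i σ pv qv '' Dm' p m

/-- A family of hyperbolic LFTs indexed by `Λ` is an `m`-dimensional continued fraction
system if the sets `F_λ⁻¹(D_m')` form a partition of `D_m'`. -/
def IsCFSystem (m : ℕ) {Λ : Type*} (iF : Λ → Fin m) (σF : Λ → Equiv.Perm (Fin m))
    (pF qF : Λ → Fin m → ℚ) : Prop :=
  (∀ l, Hyperbolic p (iF l) (σF l) (pF l) (qF l)) ∧
  (⋃ l, invImg p (iF l) (σF l) (pF l) (qF l)) = Dm' p m ∧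
  (Pairwise fun l l' => Disjoint (invImg p (iF l) (σF l) (pF l) (qF l))
      (invImg p (iF l') (σF l') (pF l') (qF l')))

/-- The sup-norm `|z|_p = max_j |z_j|_p` on `ℚ_p^m`. -/
def supNorm (z : Fin m → ℚ_[p]) : NNReal := Finset.univ.sup fun j => ‖z j‖₊

/-- `v ∈ ℚ` is the integral part of `α ∈ ℚ_p` if it is of the form
`∑_{n=0}^{N} d_n p^{-n}` with digits `d_n ∈ {0, …, p-1}` and `α - v ∈ pℤ_p`. -/
def IsIntegralPart (α : ℚ_[p]) (v : ℚ) : Prop :=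
  (∃ N : ℕ, ∃ d : ℕ → ℕ, (∀ n, d n < p) ∧
      v = ∑ n ∈ Finset.range (N + 1), (d n : ℚ) / (p : ℚ) ^ n) ∧
  ‖α - (v : ℚ_[p])‖ ≤ (p : ℝ)⁻¹

/-- The integral part `⌊α⌋_p ∈ ℚ` of a `p`-adic number. -/
def padicFloor (α : ℚ_[p]) : ℚ :=
  if h : ∃ v : ℚ, IsIntegralPart p α v then h.choose else 0

/-- `J_N`: rationals `∑_{n=0}^{N} c_n p^{-n}` with digits `c_n ∈ {0,…,p-1}` and `c_N ≠ 0`. -/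
def Jset (N : ℕ) : Set ℚ :=
  {v | ∃ c : ℕ → ℕ, (∀ n, c n < p) ∧ c N ≠ 0 ∧
      v = ∑ n ∈ Finset.range (N + 1), (c n : ℚ) / (p : ℚ) ^ n}

/-- The exponent `k = max(ord_p x - ℓ, 0)`, with `k = 0` when `ℓ = ∞`. -/
def kexp (ℓ : ℕ∞) (x : ℚ_[p]) : ℤ :=
  if ℓ = ⊤ then 0 else max (x.valuation - ((WithTop.untopD 0 ℓ : ℕ) : ℤ)) 0

/-- The transformation `T_ℓ : pℤ_p → pℤ_p`, `T_ℓ(x) = p^k/x - ⌊p^k/x⌋_p` with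
`k = max(ord_p x - ℓ, 0)`, `T_ℓ(0) = 0`. -/
def Tell (ℓ : ℕ∞) (x : ℚ_[p]) : ℚ_[p] :=
  if x = 0 then 0
  else (p : ℚ_[p]) ^ kexp p ℓ x / x - (padicFloor p ((p : ℚ_[p]) ^ kexp p ℓ x / x) : ℚ_[p])

/-- The one-dimensional set `D_1' ⊆ pℤ_p` (elements of `pℤ_p` irrational over `ℤ`). -/
def D1 : Set ℚ_[p] :=
  {x | (∀ c a : ℤ, (c : ℚ_[p]) + (a : ℚ_[p]) * x = 0 → c = 0 ∧ a = 0) ∧ x ∈ pZ p}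

/-- Index set of the continued fraction system of `T_ℓ`:
pairs `(k, v)` with `k > 0, v ∈ J_ℓ`, or `k = 0` and `v ∈ J_1 ∪ ⋯ ∪ J_ℓ`. -/
def SysIndex (ℓ : ℕ∞) : Set (ℕ × ℚ) :=
  {kv | (0 < kv.1 ∧ ∃ n : ℕ, (n : ℕ∞) = ℓ ∧ kv.2 ∈ Jset p n) ∨
        (kv.1 = 0 ∧ ∃ n : ℕ, 1 ≤ n ∧ (n : ℕ∞) ≤ ℓ ∧ kv.2 ∈ Jset p n)}

/-- The exponent `r = max(-ℓ - ord_p(x_{k+1}) + ord_p(x_1), 0)` (`0` if `ℓ = ∞`). -/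
def rexp (ℓ : ℕ∞) (x1 xk : ℚ_[p]) : ℤ :=
  if ℓ = ⊤ then 0 else max (-((WithTop.untopD 0 ℓ : ℕ) : ℤ) - xk.valuation + x1.valuation) 0

/-- The multidimensional transformation `T_{ℓ,m}` on `D_m'`. -/
def Tellm (ℓ : ℕ∞) (x : Fin m → ℚ_[p]) : Fin m → ℚ_[p] := fun k =>
  if h : (k : ℕ) + 1 = m then Tell p ℓ (x ⟨0, k.pos⟩)
  else
    (p : ℚ_[p]) ^ rexp p ℓ (x ⟨0, k.pos⟩)
        (x ⟨(k : ℕ) + 1, lt_of_le_of_ne (Nat.succ_le_of_lt k.isLt) h⟩) *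
        x ⟨(k : ℕ) + 1, lt_of_le_of_ne (Nat.succ_le_of_lt k.isLt) h⟩ / x ⟨0, k.pos⟩ -
      (padicFloor p
        ((p : ℚ_[p]) ^ rexp p ℓ (x ⟨0, k.pos⟩)
            (x ⟨(k : ℕ) + 1, lt_of_le_of_ne (Nat.succ_le_of_lt k.isLt) h⟩) *
          x ⟨(k : ℕ) + 1, lt_of_le_of_ne (Nat.succ_le_of_lt k.isLt) h⟩ / x ⟨0, k.pos⟩) : ℚ_[p])

/-- The vector of powers `p⃗^{(ℓ,x)}` of Definition 3.13. -/
def pParam (ℓ : ℕ∞) (x : Fin m → ℚ_[p]) (k : Fin m) : ℚ :=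
  if ℓ = ⊤ then 1
  else if h : (k : ℕ) + 1 = m then
    (p : ℚ) ^ max (-((WithTop.untopD 0 ℓ : ℕ) : ℤ) + (x ⟨0, k.pos⟩).valuation) 0
  else
    (p : ℚ) ^ max (-((WithTop.untopD 0 ℓ : ℕ) : ℤ) -
      (x ⟨(k : ℕ) + 1, lt_of_le_of_ne (Nat.succ_le_of_lt k.isLt) h⟩).valuation +
      (x ⟨0, k.pos⟩).valuation) 0

/-- The vector `q⃗^{(ℓ,x)}` of Definition 3.13. -/
def qParam (ℓ : ℕ∞) (x : Fin m → ℚ_[p]) (k : Fin m) : ℚ :=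
  if h : (k : ℕ) + 1 = m then padicFloor p ((pParam p ℓ x k : ℚ_[p]) / x ⟨0, k.pos⟩)
  else padicFloor p ((pParam p ℓ x k : ℚ_[p]) *
    x ⟨(k : ℕ) + 1, lt_of_le_of_ne (Nat.succ_le_of_lt k.isLt) h⟩ / x ⟨0, k.pos⟩)

/-- The `j`-th convergent `π(α; j) = F⁻¹_{ψ_0} ∘ ⋯ ∘ F⁻¹_{ψ_j} (0̄)`. -/
def convergent (Finv : ℕ → (Fin m → ℚ_[p]) → Fin m → ℚ_[p]) (j : ℕ) : Fin m → ℚ_[p] :=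
  (List.range (j + 1)).foldr (fun t acc => Finv t acc) 0

/-- The exponent `h = max_k (ord_p(p_s) - ord_p(p_k))` of Section 5. -/
def hVal (i : Fin m) (σ : Equiv.Perm (Fin m)) (pv : Fin m → ℚ) : ℤ :=
  Finset.univ.sup' ⟨i, Finset.mem_univ i⟩
    fun k => padicValRat p (pv (σ⁻¹ i)) - padicValRat p (pv k)

/-- The cylinders `V_k^{(y)}` of Section 5. -/
def Vset (i : Fin m) (σ : Equiv.Perm (Fin m)) (pv qv : Fin m → ℚ) (n : ℕ)
    (a : Fin m → ℚ_[p]) (y : ℕ) (k : Fin m) : Set ℚ_[p] :=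
  if k = i then
    {t | ∃ w : ℚ_[p], ‖w‖ ≤ (p : ℝ) ^ (-(hVal p i σ pv)) ∧
      t = (pv (σ⁻¹ i) : ℚ_[p]) / (a (σ⁻¹ i) + (qv (σ⁻¹ i) : ℚ_[p])) +
        (p : ℚ_[p]) ^ ((n : ℤ) + padicValRat p (pv (σ⁻¹ i)) -
          2 * padicValRat p (qv (σ⁻¹ i))) * ((y : ℚ_[p]) + w)}
  else
    {t | ∃ w : ℚ_[p], ‖w‖ ≤ (p : ℝ) ^ (-(n : ℤ)) ∧
      t = ((pv (σ⁻¹ i) : ℚ_[p]) / (a (σ⁻¹ i) + (qv (σ⁻¹ i) : ℚ_[p])) +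
        (p : ℚ_[p]) ^ ((n : ℤ) + padicValRat p (pv (σ⁻¹ i)) -
          2 * padicValRat p (qv (σ⁻¹ i))) * (y : ℚ_[p])) *
        (a (σ⁻¹ k) + (qv (σ⁻¹ k) : ℚ_[p])) / (pv (σ⁻¹ k) : ℚ_[p])}

end PadicCF

/-!
On `(pℤ_p)^m` the denominator `y_s + q_s` of `F⁻¹` has norm `|q_s|`, so the coordinate
`F⁻¹(y)_i = p_s / (y_s + q_s)` has constant norm `|p_s| / |q_s|` there. For `x, x'` with
`|x_i| = |x'_i| ≠ 0` the identities `F(x)_s - F(x')_s = p_s (x'_i - x_i) / (x_i x'_i)` and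
`F(x)_t - F(x')_t = p_t (x_{σ t} - c_{σ t} x_i) / x_i` (`t ≠ s`, `c_k = x'_k / x'_i`) say that
`F(x)` lies in the cube of radius `ρ` around `F(x')` exactly when the shear fixing `z_i` and
sending `z_k ↦ z_k - c_k z_i` (`k ≠ i`) maps `x - x'` into an explicit box. Hence `F⁻¹` maps a cube around `a` onto `F⁻¹(a)` plus the preimage
of a box under a shear. A shear preserves Haar measure, because it fixes a compact open box, so the
image has the measure of the box: a power of `p` whose exponent is that of the cube minus
`log_p ι(F)`.

For Borel sets, `S ↦ μ_m(F⁻¹(S ∩ (pℤ_p)^m))` is a finite measure (`F⁻¹` is a continuous injection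
on the compact set `(pℤ_p)^m`) that agrees with `ι(F)⁻¹ μ_m` restricted to `(pℤ_p)^m` on closed
balls of radius `p^{-n}`, `n ≥ 1`. In an ultrametric space such balls form a π-system and a basis
of the topology, so the two measures coincide.
-/

namespace PadicCF

open MeasureTheory Filter Topology
open scoped ENNReal NNReal

variable (p : ℕ) [Fact p.Prime]

open Metric Set

section Ultrametric

variable {X : Type*} [MetricSpace X] [IsUltrametricDist X]

theorem isPiSystem_closedBall (R : Set ℝ) :
    IsPiSystem {B : Set X | ∃ x, ∃ r ∈ R, B = closedBall x r} := by
  rintro _ ⟨x, r, hr, rfl⟩ _ ⟨y, r', hr', rfl⟩ hne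
  rcases IsUltrametricDist.closedBall_subset_trichotomy (x := x) (y := y) (r := r) (s := r')
    with h | h | h
  · exact ⟨x, r, hr, inter_eq_left.2 h⟩
  · exact ⟨y, r', hr', inter_eq_right.2 h⟩
  · exact absurd hne (not_nonempty_iff_eq_empty.2 h.inter_eq)

theorem isTopologicalBasis_closedBall {R : Set ℝ} (hR₀ : ∀ r ∈ R, 0 < r)
    (hR : ∀ ε > 0, ∃ r ∈ R, r < ε) :
    TopologicalSpace.IsTopologicalBasis {B : Set X | ∃ x, ∃ r ∈ R, B = closedBall x r} := by
  refine TopologicalSpace.isTopologicalBasis_of_isOpen_of_nhds ?_ fun x U hxU hU => ?_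
  · rintro _ ⟨x, r, hr, rfl⟩
    exact IsUltrametricDist.isOpen_closedBall x (hR₀ r hr).ne'
  · obtain ⟨ε, hε, hball⟩ := Metric.isOpen_iff.1 hU x hxU
    obtain ⟨r, hr, hrε⟩ := hR ε hε
    exact ⟨_, ⟨x, r, hr, rfl⟩, mem_closedBall_self (hR₀ r hr).le,
      (closedBall_subset_ball hrε).trans hball⟩

theorem ext_of_closedBall [SecondCountableTopology X] [MeasurableSpace X] [BorelSpace X]
    {ν₁ ν₂ : Measure X} [IsFiniteMeasure ν₁] {R : Set ℝ} (hR₀ : ∀ r ∈ R, 0 < r)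
    (hR : ∀ ε > 0, ∃ r ∈ R, r < ε) (h : ∀ x, ∀ r ∈ R, ν₁ (closedBall x r) = ν₂ (closedBall x r))
    (huniv : ν₁ univ = ν₂ univ) : ν₁ = ν₂ := by
  refine ext_of_generate_finite _ ?_ (isPiSystem_closedBall R) ?_ huniv
  · rw [BorelSpace.measurable_eq (α := X),
      (isTopologicalBasis_closedBall hR₀ hR).borel_eq_generateFrom]
  · rintro _ ⟨x, r, hr, rfl⟩
    exact h x r hr

theorem norm_sub_le_iff_of_norm_le {G : Type*} [SeminormedAddGroup G] [IsUltrametricDist G]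
    {a b : G} {ρ : ℝ} (hb : ‖b‖ ≤ ρ) : ‖a - b‖ ≤ ρ ↔ ‖a‖ ≤ ρ := by
  refine ⟨fun h => ?_, fun h => ?_⟩
  · calc ‖a‖ = ‖(a - b) + b‖ := by rw [sub_add_cancel]
      _ ≤ ρ := (IsUltrametricDist.norm_add_le_max _ _).trans (max_le h hb)
  · rw [sub_eq_add_neg]
    exact (IsUltrametricDist.norm_add_le_max _ _).trans (max_le h (by rwa [norm_neg]))

end Ultrametric

theorem setOf_forall_norm_sub_le_eq_closedBall {ι E : Type*} [Fintype ι]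
    [SeminormedAddCommGroup E] (a : ι → E) {ρ : ℝ} (hρ : 0 ≤ ρ) :
    {x : ι → E | ∀ j, ‖x j - a j‖ ≤ ρ} = closedBall a ρ := by
  rw [closedBall_pi _ hρ]
  ext x
  simp only [mem_univ_pi, mem_closedBall, dist_eq_norm]
  rfl

theorem exists_isFiniteMeasure_apply_eq_image_inter {X Y : Type*} [TopologicalSpace X]
    [MeasurableSpace X] [BorelSpace X] [TopologicalSpace Y] [T2Space Y] [MeasurableSpace Y]
    [BorelSpace Y] (μ : Measure Y) [IsFiniteMeasureOnCompacts μ] {f : X → Y} {P : Set X}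
    (hP : IsCompact P) (hf : ContinuousOn f P) (hinj : InjOn f P) :
    ∃ ν : Measure X, IsFiniteMeasure ν ∧ ∀ S, MeasurableSet S → ν S = μ (f '' (S ∩ P)) := by
  have : CompactSpace P := isCompact_iff_compactSpace.1 hP
  have hemb : MeasurableEmbedding (P.domRestrict f) :=
    (hf.domRestrict.isClosedEmbedding (injOn_iff_injective.1 hinj)).measurableEmbedding
  have happly : ∀ S, MeasurableSet S →
      (μ.comap (P.domRestrict f)).map Subtype.val S = μ (f '' (S ∩ P)) := fun S hS => by
    rw [Measure.map_apply measurable_subtype_coe hS, hemb.comap_apply, domRestrict_eq,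
      image_comp, Subtype.image_preimage_coe, inter_comm]
  refine ⟨_, ⟨?_⟩, happly⟩
  rw [happly _ MeasurableSet.univ, univ_inter]
  exact (hP.image_of_continuousOn hf).measure_lt_top

section Shear

variable {R ι : Type*} [DecidableEq ι]

def shear [CommRing R] [TopologicalSpace R] [IsTopologicalRing R] (i : ι) (c : ι → R) :
    (ι → R) ≃ₜ+ (ι → R) where
  toFun x k := if k = i then x k else x k - c k * x i
  invFun x k := if k = i then x k else x k + c k * x i
  left_inv x := by ext k; by_cases hk : k = i <;> simp [hk]
  right_inv x := by ext k; by_cases hk : k = i <;> simp [hk]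
  map_add' x y := by ext k; by_cases hk : k = i <;> simp [hk]; ring
  continuous_toFun := continuous_pi fun k => by split_ifs <;> fun_prop
  continuous_invFun := continuous_pi fun k => by split_ifs <;> fun_prop

theorem shear_apply [CommRing R] [TopologicalSpace R] [IsTopologicalRing R] (i : ι) (c : ι → R)
    (x : ι → R) (k : ι) : shear i c x k = if k = i then x k else x k - c k * x i := rfl

variable [NormedField R] [IsUltrametricDist R]

theorem shear_preimage_pi_closedBall (i : ι) (c : ι → R) {ρ : ℝ} (hc : ∀ k, ‖c k‖ ≤ ρ) :
    shear i c ⁻¹' univ.pi (fun k => closedBall 0 (if k = i then 1 else ρ)) =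
      univ.pi (fun k => closedBall 0 (if k = i then 1 else ρ)) := by
  ext x
  simp only [mem_preimage, mem_univ_pi, mem_closedBall_zero_iff, shear_apply]
  have key : ∀ y : ι → R, ‖y i‖ ≤ 1 → ∀ k, k ≠ i → (‖y k - c k * y i‖ ≤ ρ ↔ ‖y k‖ ≤ ρ) :=
    fun y hy k _ => norm_sub_le_iff_of_norm_le <| by
      rw [norm_mul]
      exact (mul_le_of_le_one_right (norm_nonneg _) hy).trans (hc k)
  refine ⟨fun h k => ?_, fun h k => ?_⟩ <;>
  · have hi : ‖x i‖ ≤ 1 := by simpa using h i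
    by_cases hk : k = i
    · simpa [hk] using h k
    · simpa [hk, key x hi k hk] using h k

variable [ProperSpace R] [MeasurableSpace R] [BorelSpace R] [Fintype ι]

/-- By uniqueness of Haar measure the shear scales `ν` by a constant, which is `1` because the
shear fixes a compact open box. -/
theorem measurePreserving_shear (ν : Measure (ι → R)) [ν.IsAddHaarMeasure] (i : ι) (c : ι → R) :
    MeasurePreserving (shear i c) ν ν := by
  set r : ι → ℝ := fun k => if k = i then 1 else max 1 ‖c‖
  set K := univ.pi fun k => closedBall (0 : R) (r k)
  have hr : ∀ k, 0 < r k := fun k => by dsimp only [r]; split_ifs <;> positivity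
  have hK : shear i c ⁻¹' K = K :=
    shear_preimage_pi_closedBall i c fun k => (norm_le_pi_norm c k).trans (le_max_right _ _)
  have hK_open : IsOpen K :=
    isOpen_set_pi finite_univ fun k _ => IsUltrametricDist.isOpen_closedBall _ (hr k).ne'
  have hK₀ : ν K ≠ 0 :=
    (hK_open.measure_pos ν ⟨0, fun k _ => mem_closedBall_self (hr k).le⟩).ne'
  have hK_top : ν K ≠ ∞ :=
    (isCompact_univ_pi fun k => isCompact_closedBall (0 : R) (r k)).measure_lt_top.ne
  have hmeas : Measurable (shear i c) := (shear i c).continuous.measurable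
  have := (shear i c).isAddHaarMeasure_map ν
  have hmap := Measure.isAddLeftInvariant_eq_smul (ν.map (shear i c)) ν
  have hK_map : ν.map (shear i c) K = ν K := by
    rw [Measure.map_apply hmeas hK_open.measurableSet, hK]
  rw [hmap, Measure.smul_apply, ENNReal.smul_def, smul_eq_mul] at hK_map
  rw [ENNReal.coe_eq_one.1 ((ENNReal.mul_eq_right hK₀ hK_top).1 hK_map)] at hmap
  exact ⟨hmeas, hmap.trans (one_smul _ _)⟩

end Shear

section Padic

variable {p}

theorem one_lt_natCast_prime : (1 : ℝ) < p := mod_cast (Fact.out : p.Prime).one_lt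

theorem natCast_prime_pos : (0 : ℝ) < p := zero_lt_one.trans one_lt_natCast_prime

theorem zpow_neg_natCast_le_inv {n : ℕ} (hn : 1 ≤ n) : (p : ℝ) ^ (-(n : ℤ)) ≤ (p : ℝ)⁻¹ := by
  rw [← zpow_neg_one]
  exact zpow_le_zpow_right₀ one_lt_natCast_prime.le (by omega)

theorem exists_zpow_neg_natCast_lt {ε : ℝ} (hε : 0 < ε) :
    ∃ n : ℕ, 1 ≤ n ∧ (p : ℝ) ^ (-(n : ℤ)) < ε := by
  obtain ⟨n, hn⟩ :=
    exists_pow_lt_of_lt_one hε (inv_lt_one_of_one_lt₀ (one_lt_natCast_prime (p := p)))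
  refine ⟨n + 1, by omega, lt_of_le_of_lt ?_ hn⟩
  rw [zpow_neg, zpow_natCast, ← inv_pow]
  exact pow_le_pow_of_le_one (inv_nonneg.2 natCast_prime_pos.le)
    (inv_le_one_of_one_le₀ one_lt_natCast_prime.le) (by omega)

theorem norm_ratCast_eq_zpow {q : ℚ} (hq : q ≠ 0) :
    ‖(q : ℚ_[p])‖ = (p : ℝ) ^ (-padicValRat p q) := by
  rw [Padic.eq_padicNorm, padicNorm.eq_zpow_of_nonzero hq]
  push_cast
  ring

theorem one_le_norm_ratCast_of_padicValRat_nonpos {q : ℚ} (hq₀ : q ≠ 0)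
    (hq : padicValRat p q ≤ 0) : 1 ≤ ‖(q : ℚ_[p])‖ := by
  rw [norm_ratCast_eq_zpow hq₀]
  exact one_le_zpow₀ one_lt_natCast_prime.le (neg_nonneg.2 hq)

theorem pZ_eq_closedBall : pZ p = closedBall (0 : ℚ_[p]) (p : ℝ)⁻¹ := by
  ext x
  simp [pZ]

theorem mem_closedBall_iff_forall_mem_pZ {ι : Type*} [Fintype ι] {y : ι → ℚ_[p]} :
    y ∈ closedBall 0 (p : ℝ)⁻¹ ↔ ∀ j, y j ∈ pZ p := by
  simp only [closedBall_pi _ (inv_nonneg.2 natCast_prime_pos.le), mem_univ_pi, Pi.zero_apply,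
    pZ_eq_closedBall]

theorem norm_add_eq_right_of_mem_pZ {y q : ℚ_[p]} (hy : y ∈ pZ p) (hq : 1 ≤ ‖q‖) :
    ‖y + q‖ = ‖q‖ := by
  have hlt : ‖y‖ < ‖q‖ :=
    ((show ‖y‖ ≤ (p : ℝ)⁻¹ from hy).trans_lt
      (inv_lt_one_of_one_lt₀ one_lt_natCast_prime)).trans_le hq
  rw [IsUltrametricDist.norm_add_eq_max_of_norm_ne_norm hlt.ne, max_eq_right hlt.le]

theorem add_ne_zero_of_mem_pZ {y q : ℚ_[p]} (hy : y ∈ pZ p) (hq : 1 ≤ ‖q‖) : y + q ≠ 0 := by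
  rw [← norm_pos_iff, norm_add_eq_right_of_mem_pZ hy hq]
  exact one_pos.trans_le hq

theorem exists_lt_norm_sub_natCast_lt_one {x : ℚ_[p]} (hx : ‖x‖ ≤ 1) :
    ∃ j < p, ‖x - j‖ < 1 := by
  obtain ⟨j, hj, hmem⟩ := PadicInt.exists_mem_range (⟨x, hx⟩ : ℤ_[p])
  rw [IsLocalRing.mem_maximalIdeal, PadicInt.mem_nonunits, PadicInt.norm_def] at hmem
  exact ⟨j, hj, hmem⟩

theorem closedBall_zpow_eq_biUnion (r : ℤ) :
    closedBall (0 : ℚ_[p]) ((p : ℝ) ^ (-r)) =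
      ⋃ j ∈ Finset.range p, closedBall ((j : ℚ_[p]) * (p : ℚ_[p]) ^ r) ((p : ℝ) ^ (-(r + 1))) := by
  ext x
  simp only [mem_closedBall, dist_zero_right, mem_iUnion, Finset.mem_range, exists_prop]
  constructor
  · intro hx
    have hz : ‖x * (p : ℚ_[p]) ^ (-r)‖ ≤ 1 := by
      rw [norm_mul, Padic.norm_p_zpow, neg_neg, ← le_div_iff₀ (zpow_pos natCast_prime_pos _),
        one_div, ← zpow_neg]
      exact hx
    obtain ⟨j, hj, hlt⟩ := exists_lt_norm_sub_natCast_lt_one hz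
    refine ⟨j, hj, ?_⟩
    rw [← zpow_zero (p : ℝ), Padic.norm_lt_pow_iff_norm_le_pow_sub_one] at hlt
    have hp : (p : ℚ_[p]) ^ r ≠ 0 := zpow_ne_zero _ (mod_cast (Fact.out : p.Prime).ne_zero)
    calc ‖x - j * (p : ℚ_[p]) ^ r‖ = ‖x * (p : ℚ_[p]) ^ (-r) - j‖ * (p : ℝ) ^ (-r) := by
          rw [← Padic.norm_p_zpow, ← norm_mul, sub_mul, zpow_neg, inv_mul_cancel_right₀ hp]
      _ ≤ (p : ℝ) ^ (0 - 1 : ℤ) * (p : ℝ) ^ (-r) := by gcongr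
      _ = (p : ℝ) ^ (-(r + 1)) := by
          rw [← zpow_add₀ natCast_prime_pos.ne']; ring_nf
  · rintro ⟨j, -, hj⟩
    have hjr : ‖(j : ℚ_[p]) * (p : ℚ_[p]) ^ r‖ ≤ (p : ℝ) ^ (-r) := by
      rw [norm_mul, Padic.norm_p_zpow]
      exact mul_le_of_le_one_left (zpow_pos natCast_prime_pos _).le
        (mod_cast Padic.norm_int_le_one (j : ℤ))
    have hle : (p : ℝ) ^ (-(r + 1)) ≤ (p : ℝ) ^ (-r) :=
      zpow_le_zpow_right₀ one_lt_natCast_prime.le (by omega)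
    calc ‖x‖ = ‖(x - j * (p : ℚ_[p]) ^ r) + j * (p : ℚ_[p]) ^ r‖ := by rw [sub_add_cancel]
      _ ≤ max ‖x - j * (p : ℚ_[p]) ^ r‖ ‖(j : ℚ_[p]) * (p : ℚ_[p]) ^ r‖ :=
          IsUltrametricDist.norm_add_le_max _ _
      _ ≤ (p : ℝ) ^ (-r) := max_le (hj.trans hle) hjr

theorem pairwiseDisjoint_closedBall_natCast_mul_zpow (r : ℤ) :
    (Finset.range p : Set ℕ).PairwiseDisjoint
      fun j => closedBall ((j : ℚ_[p]) * (p : ℚ_[p]) ^ r) ((p : ℝ) ^ (-(r + 1))) := by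
  intro j hj k hk hjk
  refine (IsUltrametricDist.closedBall_eq_or_disjoint _ _ _).resolve_left fun heq => hjk ?_
  have hmem : (j : ℚ_[p]) * (p : ℚ_[p]) ^ r ∈
      closedBall ((k : ℚ_[p]) * (p : ℚ_[p]) ^ r) ((p : ℝ) ^ (-(r + 1))) :=
    heq ▸ mem_closedBall_self (zpow_pos natCast_prime_pos _).le
  rw [mem_closedBall, dist_eq_norm, ← sub_mul, norm_mul, Padic.norm_p_zpow, neg_add,
    zpow_add₀ natCast_prime_pos.ne', mul_comm ((p : ℝ) ^ (-r)),
    mul_le_mul_iff_left₀ (zpow_pos natCast_prime_pos _)] at hmem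
  have hdvd : (p : ℤ) ∣ (j : ℤ) - k := by
    rw [← Padic.norm_intCast_lt_one_iff]
    push_cast
    exact hmem.trans_lt (by simpa using inv_lt_one_of_one_lt₀ one_lt_natCast_prime)
  exact Nat.ModEq.eq_of_lt_of_lt ((Nat.modEq_iff_dvd).2 hdvd).symm
    (Finset.mem_range.1 hj) (Finset.mem_range.1 hk)

variable [MeasurableSpace ℚ_[p]] [BorelSpace ℚ_[p]] (μ : Measure ℚ_[p]) [μ.IsAddHaarMeasure]

theorem measure_closedBall_zpow_eq_mul (r : ℤ) :
    μ (closedBall 0 ((p : ℝ) ^ (-r))) = p * μ (closedBall 0 ((p : ℝ) ^ (-(r + 1)))) := by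
  rw [closedBall_zpow_eq_biUnion, measure_biUnion_finset
    (pairwiseDisjoint_closedBall_natCast_mul_zpow r) fun _ _ => measurableSet_closedBall]
  simp [Measure.addHaar_closedBall_center]

theorem measure_closedBall_zpow (hμ : μ (pZ p) = 1) (a : ℚ_[p]) (r : ℤ) :
    μ (closedBall a ((p : ℝ) ^ (-r))) = (p : ℝ≥0∞) ^ (1 - r) := by
  have hp₀ : (p : ℝ≥0∞) ≠ 0 := mod_cast (Fact.out : p.Prime).ne_zero
  have hp_top : (p : ℝ≥0∞) ≠ ∞ := ENNReal.natCast_ne_top p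
  have hmul (k : ℤ) : (p : ℝ≥0∞) * (p : ℝ≥0∞) ^ k = (p : ℝ≥0∞) ^ (k + 1) := by
    rw [ENNReal.zpow_add hp₀ hp_top, zpow_one, mul_comm]
  rw [Measure.addHaar_closedBall_center]
  induction r using Int.inductionOn' (b := 1) with
  | zero => simpa [pZ_eq_closedBall] using hμ
  | succ k _ ih =>
    rw [measure_closedBall_zpow_eq_mul, show 1 - k = 1 - (k + 1) + 1 by ring, ← hmul] at ih
    exact (ENNReal.mul_right_inj hp₀ hp_top).1 ih
  | pred k _ ih =>
    rw [measure_closedBall_zpow_eq_mul, sub_add_cancel, ih, hmul]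
    ring_nf

theorem prod_zpow_eq_zpow_sum {ι : Type*} (s : Finset ι) (f : ι → ℤ) {x : ℝ≥0∞} (hx₀ : x ≠ 0)
    (hx : x ≠ ∞) : ∏ k ∈ s, x ^ f k = x ^ ∑ k ∈ s, f k := by
  induction s using Finset.cons_induction with
  | empty => simp
  | cons a s ha ih => rw [Finset.prod_cons, Finset.sum_cons, ih, ENNReal.zpow_add hx₀ hx]

theorem measure_pi_closedBall_zpow (hμ : μ (pZ p) = 1) {ι : Type*} [Fintype ι] (b : ι → ℚ_[p])
    (e : ι → ℤ) :
    Measure.pi (fun _ : ι => μ) (univ.pi fun k => closedBall (b k) ((p : ℝ) ^ (-e k))) =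
      (p : ℝ≥0∞) ^ ∑ k, (1 - e k) := by
  simp only [Measure.pi_pi, measure_closedBall_zpow μ hμ]
  exact prod_zpow_eq_zpow_sum _ _ (mod_cast (Fact.out : p.Prime).ne_zero)
    (ENNReal.natCast_ne_top p)

end Padic

section LFT

variable {p} {m : ℕ} {i : Fin m} {σ : Equiv.Perm (Fin m)} {pv qv : Fin m → ℚ}

theorem LFT_LFTinv (hpv : ∀ k, pv k ≠ 0) {y : Fin m → ℚ_[p]}
    (hy : y (σ⁻¹ i) + qv (σ⁻¹ i) ≠ 0) : LFT p i σ pv qv (LFTinv p i σ pv qv y) = y := by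
  have hs : (pv (σ⁻¹ i) : ℚ_[p]) ≠ 0 := mod_cast hpv _
  ext t
  by_cases ht : t = σ⁻¹ i
  · subst ht
    simp only [LFT, LFTinv, if_true]
    rw [div_div_cancel₀ hs, add_sub_cancel_right]
  · have hk : σ t ≠ i := fun h => ht (by rw [← h]; simp)
    have hσ : σ⁻¹ (σ t) = t := by simp
    have ht' : (pv t : ℚ_[p]) ≠ 0 := mod_cast hpv t
    simp only [LFT, LFTinv, if_neg ht, if_neg hk, hσ, if_true]
    field_simp
    ring

theorem LFTinv_LFT (hpv : ∀ k, pv k ≠ 0) {x : Fin m → ℚ_[p]} (hx : x i ≠ 0) :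
    LFTinv p i σ pv qv (LFT p i σ pv qv x) = x := by
  have hs : (pv (σ⁻¹ i) : ℚ_[p]) ≠ 0 := mod_cast hpv _
  ext k
  by_cases hk : k = i
  · subst hk
    simp only [LFTinv, LFT, if_true, sub_add_cancel]
    rw [div_div_cancel₀ hs]
  · have ht : σ⁻¹ k ≠ σ⁻¹ i := by simpa using hk
    have hσ : σ (σ⁻¹ k) = k := by simp
    have ht' : (pv (σ⁻¹ k) : ℚ_[p]) ≠ 0 := mod_cast hpv _
    simp only [LFTinv, LFT, if_neg hk, if_neg ht, if_true, hσ, sub_add_cancel]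
    field_simp

theorem LFT_apply_sub_LFT_apply {x x' : Fin m → ℚ_[p]} (hx : x i ≠ 0) (hx' : x' i ≠ 0)
    (t : Fin m) :
    LFT p i σ pv qv x t - LFT p i σ pv qv x' t =
      pv t * shear i (fun k => x' k / x' i) (x - x') (σ t) /
        (x i * if σ t = i then -x' i else 1) := by
  by_cases ht : σ t = i
  · obtain rfl : t = σ⁻¹ i := by rw [← ht]; simp
    simp only [LFT, shear_apply, Pi.sub_apply, ht, if_true]
    field_simp
    ring
  · have ht' : t ≠ σ⁻¹ i := fun h => ht (by rw [h]; simp)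
    simp only [LFT, shear_apply, if_neg ht, if_neg ht', Pi.sub_apply]
    field_simp
    ring

theorem LFT_mem_closedBall_LFT_iff (hpv : ∀ k, pv k ≠ 0) {x x' : Fin m → ℚ_[p]}
    (hx' : x' i ≠ 0) (hxx' : ‖x i‖ = ‖x' i‖) {ρ : ℝ} (hρ : 0 ≤ ρ) :
    LFT p i σ pv qv x ∈ closedBall (LFT p i σ pv qv x') ρ ↔
      shear i (fun k => x' k / x' i) (x - x') ∈ univ.pi fun k =>
        closedBall 0 (ρ * ‖x' i‖ * (if k = i then ‖x' i‖ else 1) / ‖(pv (σ⁻¹ k) : ℚ_[p])‖) := by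
  have hx : x i ≠ 0 := norm_ne_zero_iff.1 (hxx' ▸ norm_ne_zero_iff.2 hx')
  rw [closedBall_pi _ hρ, mem_univ_pi, mem_univ_pi]
  refine σ.forall_congr fun t => ?_
  have hpt : 0 < ‖(pv t : ℚ_[p])‖ := norm_pos_iff.2 (mod_cast hpv t)
  have hσ : σ⁻¹ (σ t) = t := by simp
  have hden : 0 < ‖x' i‖ * (if σ t = i then ‖x' i‖ else 1) := by
    have := norm_pos_iff.2 hx'
    split_ifs <;> positivity
  rw [mem_closedBall, mem_closedBall_zero_iff, dist_eq_norm, LFT_apply_sub_LFT_apply hx hx',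
    norm_div, norm_mul, norm_mul, apply_ite norm, norm_neg, norm_one, hxx',
    hσ, div_le_iff₀ hden, le_div_iff₀ hpt, mul_comm ‖(pv t : ℚ_[p])‖,
    mul_assoc ρ]

theorem norm_LFTinv_apply_self (hq : 1 ≤ ‖(qv (σ⁻¹ i) : ℚ_[p])‖) {y : Fin m → ℚ_[p]}
    (hy : y ∈ closedBall 0 (p : ℝ)⁻¹) :
    ‖LFTinv p i σ pv qv y i‖ = ‖(pv (σ⁻¹ i) : ℚ_[p])‖ / ‖(qv (σ⁻¹ i) : ℚ_[p])‖ := by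
  simp only [LFTinv, if_true, norm_div,
    norm_add_eq_right_of_mem_pZ (mem_closedBall_iff_forall_mem_pZ.1 hy _) hq]

theorem LFTinv_image_closedBall (hpv : ∀ k, pv k ≠ 0) (hq : 1 ≤ ‖(qv (σ⁻¹ i) : ℚ_[p])‖)
    {a : Fin m → ℚ_[p]} (ha : a ∈ closedBall 0 (p : ℝ)⁻¹) {ρ : ℝ} (hρ₀ : 0 ≤ ρ)
    (hρ : ρ ≤ (p : ℝ)⁻¹) :
    LFTinv p i σ pv qv '' closedBall a ρ =
      (fun x => shear i (fun k => LFTinv p i σ pv qv a k / LFTinv p i σ pv qv a i)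
          (x - LFTinv p i σ pv qv a)) ⁻¹'
        univ.pi fun k => closedBall 0 (ρ * ‖LFTinv p i σ pv qv a i‖ *
          (if k = i then ‖LFTinv p i σ pv qv a i‖ else 1) / ‖(pv (σ⁻¹ k) : ℚ_[p])‖) := by
  set x' := LFTinv p i σ pv qv a
  have hq₀ : 0 < ‖(qv (σ⁻¹ i) : ℚ_[p])‖ := one_pos.trans_le hq
  have hN : 0 < ‖x' i‖ := by
    rw [norm_LFTinv_apply_self hq ha]
    exact div_pos (norm_pos_iff.2 (mod_cast hpv _)) hq₀
  have hx' : x' i ≠ 0 := norm_pos_iff.1 hN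
  have hball : closedBall a ρ ⊆ closedBall 0 (p : ℝ)⁻¹ :=
    (closedBall_subset_closedBall hρ).trans (IsUltrametricDist.closedBall_eq_of_mem ha).ge
  have hden : ∀ y ∈ closedBall (0 : Fin m → ℚ_[p]) (p : ℝ)⁻¹, y (σ⁻¹ i) + qv (σ⁻¹ i) ≠ 0 :=
    fun y hy => add_ne_zero_of_mem_pZ (mem_closedBall_iff_forall_mem_pZ.1 hy _) hq
  ext x
  constructor
  · rintro ⟨y, hy, rfl⟩
    have hiff := LFT_mem_closedBall_LFT_iff hpv hx' (σ := σ) (qv := qv) (x := LFTinv p i σ pv qv y)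
      (by rw [norm_LFTinv_apply_self hq (hball hy), norm_LFTinv_apply_self hq ha]) hρ₀
    rw [LFT_LFTinv hpv (hden y (hball hy)), LFT_LFTinv hpv (hden a ha)] at hiff
    exact hiff.1 hy
  · intro hx
    have hxi : ‖x i‖ = ‖x' i‖ := by
      have hi := hx i (mem_univ i)
      simp only [shear_apply, if_true, Pi.sub_apply, mem_closedBall_zero_iff] at hi
      have hr : ρ * ‖x' i‖ * ‖x' i‖ / ‖(pv (σ⁻¹ i) : ℚ_[p])‖ < ‖x' i‖ := by
        have hp : ‖(pv (σ⁻¹ i) : ℚ_[p])‖ ≠ 0 := norm_ne_zero_iff.2 (mod_cast hpv _)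
        have : ρ * ‖x' i‖ * ‖x' i‖ / ‖(pv (σ⁻¹ i) : ℚ_[p])‖ =
            ρ / ‖(qv (σ⁻¹ i) : ℚ_[p])‖ * ‖x' i‖ := by
          rw [norm_LFTinv_apply_self hq ha]
          field_simp
        rw [this]
        refine mul_lt_of_lt_one_left hN ((div_lt_one hq₀).2 ?_)
        exact hρ.trans_lt ((inv_lt_one_of_one_lt₀ one_lt_natCast_prime).trans_le hq)
      have hlt : ‖x i - x' i‖ < ‖x' i‖ := hi.trans_lt hr
      rw [← sub_add_cancel (x i) (x' i),
        IsUltrametricDist.norm_add_eq_max_of_norm_ne_norm hlt.ne, max_eq_right hlt.le]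
    have hiff := LFT_mem_closedBall_LFT_iff hpv hx' hxi hρ₀ (σ := σ) (qv := qv)
    rw [LFT_LFTinv hpv (hden a ha)] at hiff
    exact ⟨_, hiff.2 hx, LFTinv_LFT hpv (norm_pos_iff.1 (hxi ▸ hN))⟩

theorem continuousOn_LFTinv (hpv : ∀ k, pv k ≠ 0) (hq : 1 ≤ ‖(qv (σ⁻¹ i) : ℚ_[p])‖) :
    ContinuousOn (LFTinv p i σ pv qv) (closedBall 0 (p : ℝ)⁻¹) := by
  have hden : ∀ y ∈ closedBall (0 : Fin m → ℚ_[p]) (p : ℝ)⁻¹, y (σ⁻¹ i) + qv (σ⁻¹ i) ≠ 0 :=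
    fun y hy => add_ne_zero_of_mem_pZ (mem_closedBall_iff_forall_mem_pZ.1 hy _) hq
  refine continuousOn_pi.2 fun k => ?_
  by_cases hk : k = i
  · simp only [LFTinv, if_pos hk]
    exact continuousOn_const.div (by fun_prop) hden
  · simp only [LFTinv, if_neg hk]
    exact ContinuousOn.div (by fun_prop) (by fun_prop)
      fun y hy => mul_ne_zero (mod_cast hpv _) (hden y hy)

theorem injOn_LFTinv (hpv : ∀ k, pv k ≠ 0) (hq : 1 ≤ ‖(qv (σ⁻¹ i) : ℚ_[p])‖) :
    InjOn (LFTinv p i σ pv qv) (closedBall 0 (p : ℝ)⁻¹) :=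
  LeftInvOn.injOn (f₁' := LFT p i σ pv qv) fun _ hy =>
    LFT_LFTinv hpv (add_ne_zero_of_mem_pZ (mem_closedBall_iff_forall_mem_pZ.1 hy _) hq)

end LFT

section Measure

variable {m : ℕ}

/-- The factor `ι(F)` of the paper. -/
def scaleFactor (i : Fin m) (σ : Equiv.Perm (Fin m)) (pv qv : Fin m → ℚ) : ℝ≥0∞ :=
  (p : ℝ≥0∞) ^ ((m : ℤ) * padicValRat p (pv (σ⁻¹ i)) +
    ((m : ℤ) + 1) * (-padicValRat p (qv (σ⁻¹ i))) -
    ∑ t ∈ Finset.univ.erase (σ⁻¹ i), padicValRat p (pv t))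

variable {p} [MeasurableSpace ℚ_[p]] [BorelSpace ℚ_[p]] (μ : Measure ℚ_[p]) [μ.IsAddHaarMeasure]
  {i : Fin m} {σ : Equiv.Perm (Fin m)} {pv qv : Fin m → ℚ}

theorem measure_LFTinv_image_closedBall_eq (ν : Measure (Fin m → ℚ_[p])) [ν.IsAddHaarMeasure]
    (hpv : ∀ k, pv k ≠ 0) (hq : 1 ≤ ‖(qv (σ⁻¹ i) : ℚ_[p])‖) {a : Fin m → ℚ_[p]}
    (ha : a ∈ closedBall 0 (p : ℝ)⁻¹) {ρ : ℝ} (hρ₀ : 0 ≤ ρ) (hρ : ρ ≤ (p : ℝ)⁻¹) :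
    ν (LFTinv p i σ pv qv '' closedBall a ρ) =
      ν (univ.pi fun k => closedBall 0 (ρ * ‖LFTinv p i σ pv qv a i‖ *
        (if k = i then ‖LFTinv p i σ pv qv a i‖ else 1) / ‖(pv (σ⁻¹ k) : ℚ_[p])‖)) := by
  set x' := LFTinv p i σ pv qv a
  set c : Fin m → ℚ_[p] := fun k => x' k / x' i
  have hshift : (fun x => shear i c (x - x')) = shear i c ∘ (· + -x') := by
    ext x : 1
    simp only [Function.comp_apply, sub_eq_add_neg]
  rw [LFTinv_image_closedBall hpv hq ha hρ₀ hρ, hshift, preimage_comp, measure_preimage_add_right,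
    (measurePreserving_shear ν i c).measure_preimage
      (MeasurableSet.univ_pi fun _ => measurableSet_closedBall).nullMeasurableSet]

theorem measure_LFTinv_image_closedBall (hμ : μ (pZ p) = 1) (hpv : ∀ k, pv k ≠ 0)
    (hq₀ : qv (σ⁻¹ i) ≠ 0) (hq : padicValRat p (qv (σ⁻¹ i)) ≤ 0) {a : Fin m → ℚ_[p]}
    (ha : a ∈ closedBall 0 (p : ℝ)⁻¹) {n : ℕ} (hn : 1 ≤ n) :
    Measure.pi (fun _ => μ) (LFTinv p i σ pv qv '' closedBall a ((p : ℝ) ^ (-(n : ℤ)))) =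
      (scaleFactor p i σ pv qv)⁻¹ *
        Measure.pi (fun _ => μ) (closedBall a ((p : ℝ) ^ (-(n : ℤ)))) := by
  have hp₀ : (p : ℝ) ≠ 0 := natCast_prime_pos.ne'
  have hρ₀ : (0 : ℝ) ≤ (p : ℝ) ^ (-(n : ℤ)) := (zpow_pos natCast_prime_pos _).le
  have hq' : 1 ≤ ‖(qv (σ⁻¹ i) : ℚ_[p])‖ := one_le_norm_ratCast_of_padicValRat_nonpos hq₀ hq
  have hN : ‖LFTinv p i σ pv qv a i‖ =
      (p : ℝ) ^ (padicValRat p (qv (σ⁻¹ i)) - padicValRat p (pv (σ⁻¹ i))) := by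
    rw [norm_LFTinv_apply_self hq' ha, norm_ratCast_eq_zpow (hpv _), norm_ratCast_eq_zpow hq₀,
      ← zpow_sub₀ hp₀]
    ring_nf
  set v := padicValRat p (pv (σ⁻¹ i))
  set w := padicValRat p (qv (σ⁻¹ i))
  set e : Fin m → ℤ := fun k => n + v - w - padicValRat p (pv (σ⁻¹ k)) + if k = i then v - w else 0
  have hr : ∀ k, (p : ℝ) ^ (-(n : ℤ)) * (p : ℝ) ^ (w - v) *
      (if k = i then (p : ℝ) ^ (w - v) else 1) / ‖(pv (σ⁻¹ k) : ℚ_[p])‖ = (p : ℝ) ^ (-e k) := by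
    intro k
    simp only [norm_ratCast_eq_zpow (hpv _), e]
    split_ifs <;> simp only [← zpow_add₀ hp₀, ← zpow_sub₀ hp₀, mul_one] <;> ring_nf
  have hp : (p : ℝ≥0∞) ≠ 0 := mod_cast (Fact.out : p.Prime).ne_zero
  rw [measure_LFTinv_image_closedBall_eq _ hpv hq' ha hρ₀ (zpow_neg_natCast_le_inv hn), hN]
  simp only [hr]
  rw [measure_pi_closedBall_zpow μ hμ, closedBall_pi _ hρ₀,
    measure_pi_closedBall_zpow μ hμ _ fun _ => (n : ℤ), scaleFactor, ← ENNReal.zpow_neg,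
    ← ENNReal.zpow_add hp (ENNReal.natCast_ne_top p)]
  congr 1
  simp only [e, Finset.sum_sub_distrib, Finset.sum_add_distrib, Finset.sum_ite_eq',
    Finset.mem_univ, if_true, Finset.sum_const, Finset.card_univ, Fintype.card_fin, nsmul_eq_mul,
    Equiv.sum_comp σ⁻¹ fun t => padicValRat p (pv t),
    Finset.sum_erase_eq_sub (Finset.mem_univ (σ⁻¹ i))]
  ring

theorem measure_LFTinv_image_closedBall_inter (hμ : μ (pZ p) = 1) (hpv : ∀ k, pv k ≠ 0)
    (hq₀ : qv (σ⁻¹ i) ≠ 0) (hq : padicValRat p (qv (σ⁻¹ i)) ≤ 0) (x : Fin m → ℚ_[p]) {n : ℕ}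
    (hn : 1 ≤ n) :
    Measure.pi (fun _ => μ) (LFTinv p i σ pv qv ''
        (closedBall x ((p : ℝ) ^ (-(n : ℤ))) ∩ closedBall 0 (p : ℝ)⁻¹)) =
      (scaleFactor p i σ pv qv)⁻¹ *
        Measure.pi (fun _ => μ) (closedBall x ((p : ℝ) ^ (-(n : ℤ))) ∩ closedBall 0 (p : ℝ)⁻¹) := by
  rcases (closedBall x ((p : ℝ) ^ (-(n : ℤ))) ∩ closedBall 0 (p : ℝ)⁻¹).eq_empty_or_nonempty
    with h | ⟨y, hyx, hyP⟩
  · rw [h, image_empty, measure_empty, mul_zero]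
  · rw [IsUltrametricDist.closedBall_eq_of_mem hyx, inter_eq_left.2]
    · exact measure_LFTinv_image_closedBall μ hμ hpv hq₀ hq hyP hn
    · rw [IsUltrametricDist.closedBall_eq_of_mem hyP]
      exact closedBall_subset_closedBall (zpow_neg_natCast_le_inv hn)

theorem measure_LFTinv_image (hμ : μ (pZ p) = 1) (hpv : ∀ k, pv k ≠ 0)
    (hq₀ : qv (σ⁻¹ i) ≠ 0) (hq : padicValRat p (qv (σ⁻¹ i)) ≤ 0) {S : Set (Fin m → ℚ_[p])}
    (hS : MeasurableSet S) (hSP : S ⊆ closedBall 0 (p : ℝ)⁻¹) :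
    Measure.pi (fun _ => μ) (LFTinv p i σ pv qv '' S) =
      (scaleFactor p i σ pv qv)⁻¹ * Measure.pi (fun _ => μ) S := by
  set P := closedBall (0 : Fin m → ℚ_[p]) (p : ℝ)⁻¹
  have hq' : 1 ≤ ‖(qv (σ⁻¹ i) : ℚ_[p])‖ := one_le_norm_ratCast_of_padicValRat_nonpos hq₀ hq
  obtain ⟨ν, _, hν⟩ := exists_isFiniteMeasure_apply_eq_image_inter (Measure.pi fun _ => μ)
    (isCompact_closedBall 0 _) (continuousOn_LFTinv hpv hq') (injOn_LFTinv hpv hq')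
  have hν_eq : ν = (scaleFactor p i σ pv qv)⁻¹ • (Measure.pi fun _ => μ).restrict P := by
    refine ext_of_closedBall (R := {r | ∃ n : ℕ, 1 ≤ n ∧ r = (p : ℝ) ^ (-(n : ℤ))}) ?_ ?_ ?_ ?_
    · rintro _ ⟨n, -, rfl⟩
      exact zpow_pos natCast_prime_pos _
    · intro ε hε
      obtain ⟨n, hn, hnε⟩ := exists_zpow_neg_natCast_lt (p := p) hε
      exact ⟨_, ⟨n, hn, rfl⟩, hnε⟩
    · rintro x _ ⟨n, hn, rfl⟩
      rw [hν _ measurableSet_closedBall, Measure.smul_apply,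
        Measure.restrict_apply measurableSet_closedBall, smul_eq_mul]
      exact measure_LFTinv_image_closedBall_inter μ hμ hpv hq₀ hq x hn
    · have h := measure_LFTinv_image_closedBall_inter μ hμ hpv hq₀ hq 0 le_rfl
      rw [Nat.cast_one, zpow_neg_one, inter_self] at h
      rw [hν _ MeasurableSet.univ, univ_inter, Measure.smul_apply, Measure.restrict_apply_univ,
        smul_eq_mul, h]
  rw [← inter_eq_left.2 hSP, ← hν S hS, hν_eq, Measure.smul_apply, Measure.restrict_apply hS,
    smul_eq_mul]

end Measure

theorem measure_scaling (m : ℕ) [MeasurableSpace ℚ_[p]] [BorelSpace ℚ_[p]]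
    (μ : Measure ℚ_[p]) [μ.IsAddHaarMeasure] (hμ : μ (pZ p) = 1)
    (i : Fin m) (σ : Equiv.Perm (Fin m)) (pv qv : Fin m → ℚ)
    (hF : Hyperbolic p i σ pv qv) :
    (∀ n : ℕ, 1 ≤ n → ∀ a : Fin m → ℚ_[p], (∀ j, a j ∈ pZ p) →
      (Measure.pi fun _ : Fin m => μ)
          (LFTinv p i σ pv qv '' {x | ∀ j, ‖x j - a j‖ ≤ (p : ℝ) ^ (-(n : ℤ))}) =
        ((p : ℝ≥0∞) ^ ((m : ℤ) * padicValRat p (pv (σ⁻¹ i)) +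
            ((m : ℤ) + 1) * (-padicValRat p (qv (σ⁻¹ i))) -
            ∑ t ∈ Finset.univ.erase (σ⁻¹ i), padicValRat p (pv t)))⁻¹ *
          (Measure.pi fun _ : Fin m => μ) {x | ∀ j, ‖x j - a j‖ ≤ (p : ℝ) ^ (-(n : ℤ))}) ∧
    (∀ S : Set (Fin m → ℚ_[p]), MeasurableSet S → S ⊆ {x | ∀ j, x j ∈ pZ p} →
      (Measure.pi fun _ : Fin m => μ) (LFTinv p i σ pv qv '' S) =
        ((p : ℝ≥0∞) ^ ((m : ℤ) * padicValRat p (pv (σ⁻¹ i)) +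
            ((m : ℤ) + 1) * (-padicValRat p (qv (σ⁻¹ i))) -
            ∑ t ∈ Finset.univ.erase (σ⁻¹ i), padicValRat p (pv t)))⁻¹ *
          (Measure.pi fun _ : Fin m => μ) S) := by
  obtain ⟨hpv, ⟨hq₀, hq, -⟩, -, -⟩ := hF
  have hpv₀ : ∀ k, pv k ≠ 0 := fun k => (hpv k).1
  refine ⟨fun n hn a ha => ?_, fun S hS hSP => ?_⟩
  · rw [setOf_forall_norm_sub_le_eq_closedBall a (zpow_pos natCast_prime_pos _).le]
    exact measure_LFTinv_image_closedBall μ hμ hpv₀ hq₀ hq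
      (mem_closedBall_iff_forall_mem_pZ.2 ha) hn
  · exact measure_LFTinv_image μ hμ hpv₀ hq₀ hq hS
      fun x hx => mem_closedBall_iff_forall_mem_pZ.2 (hSP hx)

end PadicCF
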